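/- arXiv:1401.2576 — 3 statements merged into one kernel-verified Lean document; each statement's English description precedes it below -/
import Mathlib

section
/- For any closed subset M₀ of a smooth manifold M there exists a smooth nonnegative function φ : M → ℝ whose zero set is exactly M₀ (a weak test function for M₀). -/
open scoped Manifold

/-- For any closed subset `M₀` of a smooth manifold `M` there is a
smooth nonnegative function `φ : M → ℝ` whose zero set is exactly `M₀`
(a weak test function for `M₀`). -/
theorem stmt_3 {E : Type*} [NormedAddCommGroup E] [NormedSpace ℝ E]
    [FiniteDimensional ℝ E]
    {H : Type*} [TopologicalSpace H] (I : ModelWithCorners ℝ E H)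
    {M : Type*} [TopologicalSpace M] [ChartedSpace H M]
    [IsManifold I (⊤ : ℕ∞) M] [T2Space M] [SecondCountableTopology M]
    (M₀ : Set M) (hM₀ : IsClosed M₀) :
    ∃ φ : M → ℝ, ContMDiff I 𝓘(ℝ, ℝ) (⊤ : ℕ∞) φ ∧
      (∀ x, 0 ≤ φ x) ∧ φ ⁻¹' {0} = M₀ := by
  have : LocallyCompactSpace M := Manifold.locallyCompact_of_finiteDimensional I
  obtain ⟨φ, hφ_support, hφ_smooth, hφ_nonneg⟩ := hM₀.isOpen_compl.exists_contMDiff_support_eq I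
  refine ⟨φ, hφ_smooth, hφ_nonneg, ?_⟩
  rw [← compl_compl M₀, ← hφ_support]
  ext x
  simp
end

section
/- For any closed subset M₀ of a smooth manifold M there exists a smooth function φ : M → [0,1] whose zero set is exactly M₀ and such that the differential of φ vanishes at every point of M₀ (a strong test function for M₀). -/
open scoped Manifold

/- Mathlib provides a smooth `f : M → [0,1]` with zero set exactly `M₀` (via smooth partitions of
unity). Its square `f * f` has the same zero set and values, and by the product rule its
differential `2 f(x) dfₓ` vanishes wherever `f` does. -/

theorem mfderiv_mul_self_eq_zero {𝕜 : Type*} [NontriviallyNormedField 𝕜]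
    {E : Type*} [NormedAddCommGroup E] [NormedSpace 𝕜 E]
    {H : Type*} [TopologicalSpace H] {I : ModelWithCorners 𝕜 E H}
    {M : Type*} [TopologicalSpace M] [ChartedSpace H M]
    {R : Type*} [NormedCommRing R] [NormedAlgebra 𝕜 R] {f : M → R} {x : M}
    (hf : MDifferentiableAt I 𝓘(𝕜, R) f x) (hfx : f x = 0) :
    mfderiv I 𝓘(𝕜, R) (f * f) x = 0 := by
  obtain ⟨L, hL⟩ : ∃ L : E →L[𝕜] R, HasMFDerivAt I 𝓘(𝕜, R) f x L := ⟨_, hf.hasMFDerivAt⟩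
  rw [(hL.mul hL).mfderiv, hfx]
  exact (congrArg₂ (· + ·) (zero_smul R L) (zero_smul R L)).trans (add_zero 0)

/-- For any closed subset `M₀` of a smooth manifold `M` there is a
smooth function `φ : M → [0,1]` whose zero set is exactly `M₀` and whose
differential vanishes at every point of `M₀` (a strong test function for `M₀`). -/
theorem stmt_4 {E : Type*} [NormedAddCommGroup E] [NormedSpace ℝ E]
    [FiniteDimensional ℝ E]
    {H : Type*} [TopologicalSpace H] (I : ModelWithCorners ℝ E H)
    {M : Type*} [TopologicalSpace M] [ChartedSpace H M]
    [IsManifold I (⊤ : ℕ∞) M] [T2Space M] [SecondCountableTopology M]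
    (M₀ : Set M) (hM₀ : IsClosed M₀) :
    ∃ φ : M → ℝ, ContMDiff I 𝓘(ℝ, ℝ) (⊤ : ℕ∞) φ ∧
      (∀ x, φ x ∈ Set.Icc (0 : ℝ) 1) ∧ φ ⁻¹' {0} = M₀ ∧
      ∀ x ∈ M₀, mfderiv I 𝓘(ℝ, ℝ) φ x = 0 := by
  have : LocallyCompactSpace M := Manifold.locallyCompact_of_finiteDimensional I
  obtain ⟨f, hf, hrange, hzero, -⟩ :=
    exists_contMDiff_zero_iff_one_iff_of_isClosed I (n := (⊤ : ℕ∞)) hM₀ isClosed_empty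
      (Set.disjoint_empty M₀)
  refine ⟨f * f, hf.mul hf, fun x => ?_, ?_, fun x hx => ?_⟩
  · obtain ⟨h₀, h₁⟩ := hrange (Set.mem_range_self x)
    exact ⟨mul_nonneg h₀ h₀, mul_le_one₀ h₁ h₀ h₁⟩
  · ext x
    simp [← hzero x]
  · exact mfderiv_mul_self_eq_zero ((hf x).mdifferentiableAt (by simp)) ((hzero x).1 hx)
end

section
/- For a smooth function f on a manifold M, the operator d_f : Ω^p(M) → Ω^{p+1}(M) defined by d_f ω = f dω − p df ∧ ω satisfies d_f ∘ d_f = 0. -/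
/-! The two first-order parts of `d_f (d_f ω)` are `(p + 1) f df ∧ dω`, once from `f d(d_f ω)` and
once from `(p + 1) df ∧ d_f ω`, and they cancel; every other term contains `d d = 0` or
`df ∧ df = 0`, the latter because `df` has odd degree. -/

section GradedDifferential

variable {A : Type*} [Ring A] [Algebra ℝ A] (𝒜 : ℕ → Submodule ℝ A) (d : A →ₗ[ℝ] A)

/-- `d_f ω = f dω − p df ∧ ω`; the degree `p` of `ω` is passed explicitly, not read off `ω`. -/
def twistedDiff (f : A) (p : ℕ) (ω : A) : A :=
  f * d ω - (p : ℝ) • (d f * ω)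

theorem mul_self_eq_zero_of_mem_of_odd
    (hcomm : ∀ (p q : ℕ) (a b : A), a ∈ 𝒜 p → b ∈ 𝒜 q → a * b = ((-1 : ℝ) ^ (p * q)) • (b * a))
    {q : ℕ} (hq : Odd q) {a : A} (ha : a ∈ 𝒜 q) : a * a = 0 := by
  have h := hcomm q q a a ha ha
  rw [(hq.mul hq).neg_one_pow, neg_one_smul] at h
  have h2 : (2 : ℝ) • (a * a) = 0 := by
    rw [two_smul]
    nth_rw 1 [h]
    exact neg_add_cancel _
  exact (smul_eq_zero.mp h2).resolve_left two_ne_zero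

theorem commute_of_mem_zero
    (hcomm : ∀ (p q : ℕ) (a b : A), a ∈ 𝒜 p → b ∈ 𝒜 q → a * b = ((-1 : ℝ) ^ (p * q)) • (b * a))
    {q : ℕ} {a b : A} (ha : a ∈ 𝒜 q) (hb : b ∈ 𝒜 0) : Commute a b := by
  simpa [Commute, SemiconjBy] using hcomm q 0 a b ha hb

variable {d}

theorem d_mul_of_mem_zero
    (hleib : ∀ (p : ℕ) (a b : A), a ∈ 𝒜 p → d (a * b) = d a * b + ((-1 : ℝ) ^ p) • (a * d b))
    {f : A} (hf : f ∈ 𝒜 0) (b : A) : d (f * b) = d f * b + f * d b := by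
  simpa using hleib 0 f b hf

theorem d_d_mul_of_mem_zero
    (hdd : ∀ a : A, d (d a) = 0)
    (hleib : ∀ (p : ℕ) (a b : A), a ∈ 𝒜 p → d (a * b) = d a * b + ((-1 : ℝ) ^ p) • (a * d b))
    (hd : ∀ a ∈ 𝒜 0, d a ∈ 𝒜 1) {f : A} (hf : f ∈ 𝒜 0) (b : A) :
    d (d f * b) = -(d f * d b) := by
  simpa [hdd f] using hleib 1 (d f) b (hd f hf)

theorem twistedDiff_twistedDiff {f : A} (hdd : ∀ a : A, d (d a) = 0)
    (hf_mul : ∀ b, d (f * b) = d f * b + f * d b) (hdf_mul : ∀ b, d (d f * b) = -(d f * d b))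
    (hdf_sq : d f * d f = 0) (hdf_comm : Commute (d f) f) (p : ℕ) (ω : A) :
    twistedDiff d f (p + 1) (twistedDiff d f p ω) = 0 := by
  have hdf_f : d f * (f * d ω) = f * (d f * d ω) := by
    rw [← mul_assoc, hdf_comm.eq, mul_assoc]
  have hdf_df : d f * (d f * ω) = 0 := by
    rw [← mul_assoc, hdf_sq, zero_mul]
  simp only [twistedDiff, map_sub, map_smul, hf_mul, hdf_mul, hdd, mul_zero, add_zero, mul_sub,
    mul_add, mul_smul_comm, hdf_f, hdf_df, smul_zero, sub_zero, smul_neg, sub_neg_eq_add]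
  push_cast
  module

end GradedDifferential

theorem stmt_12_general {A : Type*} [Ring A] [Algebra ℝ A]
    (𝒜 : ℕ → Submodule ℝ A) (d : A →ₗ[ℝ] A)
    -- `d` raises degree by one
    (hd : ∀ p : ℕ, ∀ a ∈ 𝒜 p, d a ∈ 𝒜 (p + 1))
    -- `d ∘ d = 0`
    (hdd : ∀ a : A, d (d a) = 0)
    -- graded Leibniz rule
    (hleib : ∀ (p : ℕ) (a b : A), a ∈ 𝒜 p →
      d (a * b) = d a * b + ((-1 : ℝ) ^ p) • (a * d b))
    -- graded commutativity
    (hcomm : ∀ (p q : ℕ) (a b : A), a ∈ 𝒜 p → b ∈ 𝒜 q →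
      a * b = ((-1 : ℝ) ^ (p * q)) • (b * a))
    (p : ℕ) (f ω : A) (hf : f ∈ 𝒜 0) :
    f * d (f * d ω - (p : ℝ) • (d f * ω)) -
      ((p + 1 : ℕ) : ℝ) • (d f * (f * d ω - (p : ℝ) • (d f * ω))) = 0 := by
  have hdf : d f ∈ 𝒜 1 := hd 0 f hf
  exact twistedDiff_twistedDiff hdd (d_mul_of_mem_zero 𝒜 hleib hf)
    (d_d_mul_of_mem_zero 𝒜 hdd hleib (hd 0) hf)
    (mul_self_eq_zero_of_mem_of_odd 𝒜 hcomm odd_one hdf)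
    (commute_of_mem_zero 𝒜 hcomm hdf hf) p ω

/-- For a smooth function `f` (degree-0 form), the twisted
differential `d_f ω = f dω − p df ∧ ω` on `p`-forms satisfies `d_f ∘ d_f = 0`.
Here the inner `d_f` acts on the `p`-form `ω` and the outer one on the
resulting `(p+1)`-form. -/
theorem stmt_12 {A : Type*} [Ring A] [Algebra ℝ A]
    (𝒜 : ℕ → Submodule ℝ A) (d : A →ₗ[ℝ] A)
    -- `d` raises degree by one
    (hd : ∀ p : ℕ, ∀ a ∈ 𝒜 p, d a ∈ 𝒜 (p + 1))
    -- `d ∘ d = 0`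
    (hdd : ∀ a : A, d (d a) = 0)
    -- graded Leibniz rule
    (hleib : ∀ (p : ℕ) (a b : A), a ∈ 𝒜 p →
      d (a * b) = d a * b + ((-1 : ℝ) ^ p) • (a * d b))
    -- graded commutativity
    (hcomm : ∀ (p q : ℕ) (a b : A), a ∈ 𝒜 p → b ∈ 𝒜 q →
      a * b = ((-1 : ℝ) ^ (p * q)) • (b * a))
    (p : ℕ) (f ω : A) (hf : f ∈ 𝒜 0) (hω : ω ∈ 𝒜 p) :
    f * d (f * d ω - (p : ℝ) • (d f * ω)) -
      ((p + 1 : ℕ) : ℝ) • (d f * (f * d ω - (p : ℝ) • (d f * ω))) = 0 :=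
  stmt_12_general 𝒜 d hd hdd hleib hcomm p f ω hf
end
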